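/- Suppose (qₙ,pₙ) for n ∈ ℕ is a ◁-descending sequence of π-tagged conditions such that for infinitely many n the strong relation (q_{n+1},p_{n+1}) ◁* (qₙ,pₙ) holds. Then the upward closure of {π(qₙ) : n ∈ ℕ} in P equals the upward closure of {pₙ : n ∈ ℕ}. -/
import Mathlib


/-- A `π`-tagged condition is a pair `(q, p)` with `p ≤ π q`. -/
def Tagged {Q P : Type*} [Preorder Q] [Preorder P] (π : Q → P) : Type _ :=
  {x : Q × P // x.2 ≤ π x.1}

/-- The ordering `◁` on tagged conditions. -/
def TaggedLE {Q P : Type*} [Preorder Q] [Preorder P] {π : Q → P}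
    (b a : Tagged π) : Prop :=
  (b.1.1 = a.1.1 ∧ b.1.2 ≤ a.1.2) ∨ (b.1.1 ≤ a.1.1 ∧ π b.1.1 ≤ a.1.2)

/-- The strong relation `◁*` on tagged conditions. -/
def TaggedSLE {Q P : Type*} [Preorder Q] [Preorder P] {π : Q → P}
    (b a : Tagged π) : Prop :=
  b.1.1 ≤ a.1.1 ∧ π b.1.1 ≤ a.1.2

/-- Corollary 13: for a `◁`-descending sequence of tagged conditions in which the
strong relation `◁*` holds infinitely often between successive terms, the upward
closure of the projected working parts equals the upward closure of the tags. -/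
theorem tagged_sequence_projection {Q P : Type*} [PartialOrder Q] [PartialOrder P]
    (π : Q → P) (hmono : Monotone π)
    (hproj : ∀ q : Q, ∀ p : P, p ≤ π q → ∃ q' : Q, q' ≤ q ∧ π q' ≤ p)
    (seq : ℕ → Tagged π)
    (hdesc : ∀ n : ℕ, TaggedLE (seq (n + 1)) (seq n))
    (hstrong : ∀ N : ℕ, ∃ n : ℕ, N ≤ n ∧ TaggedSLE (seq (n + 1)) (seq n)) :
    {x : P | ∃ n : ℕ, π (seq n).1.1 ≤ x} = {x : P | ∃ n : ℕ, (seq n).1.2 ≤ x} := by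
  have hstep : ∀ n : ℕ, (seq (n + 1)).1.2 ≤ (seq n).1.2 := by
    intro n
    rcases hdesc n with ⟨_, h⟩ | ⟨_, h⟩
    · exact h
    · exact (seq (n + 1)).2.trans h
  have htag : ∀ m n : ℕ, n ≤ m → (seq m).1.2 ≤ (seq n).1.2 := by
    intro m n h
    induction m with
    | zero => simp_all
    | succ k ih =>
      rcases Nat.lt_or_ge n (k + 1) with hlt | hge
      · exact (hstep k).trans (ih (Nat.lt_succ_iff.mp hlt))
      · have : n = k + 1 := le_antisymm h hge
        simp [this]
  ext x
  simp only [Set.mem_setOf_eq]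
  constructor
  · rintro ⟨n, hn⟩
    exact ⟨n, (seq n).2.trans hn⟩
  · rintro ⟨n, hn⟩
    obtain ⟨m, hm, hq, hp⟩ := hstrong n
    exact ⟨m + 1, hp.trans ((htag m n hm).trans hn)⟩
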